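/- Let S be a linear schema containing a label l, let ρl be an executable prefix of a terminating path through S, let V be a set of variables and let S' be a quotient of S containing l. Then S' is a (ρl,V)-path-faithful dynamic slice of S if and only if M[ρ]_e(v) = M[proj_{S'}(ρ)]_e(v) for every v ∈ V, and every expression p(t) = X which is a consequence of proj_{S'}(ρ) is also a consequence of ρ. -/

import Mathlib

/-!
Only if: let `j` be the Herbrand interpretation under which `p(t)` has value `X` exactly when
`p(t) = X` is a consequence of `ρ`. Since `ρl` is executable, `ρ` never passes through a
predicate term with both values, so `ρ` is a prefix of `π(S, j, e)`. Path faithfulness makes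
`proj_{S'}(ρ)` a prefix of `π(S', j, e)`, so each `p(t) = X` it passes through is a
consequence of `ρ`.

If: by linearity, the projection of a path through `S` onto a quotient is a path through the
quotient. Evaluating Herbrand terms in a domain `D` commutes with execution, so a path is
consistent with `(i, d)` iff `i.pn p` maps the value of `t` in `(i, d)` to `Z` for every
consequence `p(t) = Z` of the path. Hence any `(i, d)` consistent with `ρ` is consistent with
`proj_{S'}(ρ)`, whose consequences are among those of `ρ`.
-/

namespace SchemaSlicing

/- Function symbols, predicate symbols, variables and labels are drawn from
   fixed infinite sets; we model each by ℕ. Arities are implicit: each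
   occurrence of a symbol carries the list of its arguments. -/
abbrev Var := ℕ
abbrev Fn := ℕ
abbrev Pn := ℕ
abbrev Label := ℕ

/-- Structured program schemas. `loop` is the while-construct. -/
inductive Schema : Type where
  | skip : Schema
  | label : Label → Schema
  | assign : Var → Fn → List Var → Schema
  | seq : Schema → Schema → Schema
  | ite : Pn → List Var → Schema → Schema → Schema
  | loop : Pn → List Var → Schema → Schema
  deriving DecidableEq

/-- Letters of the alphabet L(S): labels, assignment letters ⟨y:=f(x)⟩ and
    predicate letters ⟨p(x),Z⟩. -/
inductive Letter : Type where
  | lab : Label → Letter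
  | asgn : Var → Fn → List Var → Letter
  | pred : Pn → List Var → Bool → Letter
  deriving DecidableEq

/-- Symbols: function symbols, predicate symbols and labels. -/
inductive Sym : Type where
  | fn : Fn → Sym
  | pn : Pn → Sym
  | lab : Label → Sym
  deriving DecidableEq

/-- The list of occurrences of function symbols, predicate symbols and labels in a schema. -/
def Schema.syms : Schema → List Sym
  | .skip => []
  | .label l => [Sym.lab l]
  | .assign _ f _ => [Sym.fn f]
  | .seq S₁ S₂ => S₁.syms ++ S₂.syms
  | .ite p _ S₁ S₂ => Sym.pn p :: (S₁.syms ++ S₂.syms)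
  | .loop q _ T => Sym.pn q :: T.syms

/-- A schema is linear if no function symbol, predicate symbol or label occurs
    more than once in it. -/
def Schema.Linear (S : Schema) : Prop := S.syms.Nodup

/-- Π(S), the set of terminating paths through S. -/
inductive Paths : Schema → List Letter → Prop where
  | skip : Paths Schema.skip []
  | label (l : Label) : Paths (Schema.label l) [Letter.lab l]
  | assign (y : Var) (f : Fn) (xs : List Var) :
      Paths (Schema.assign y f xs) [Letter.asgn y f xs]
  | seq {S₁ S₂ w₁ w₂} : Paths S₁ w₁ → Paths S₂ w₂ → Paths (Schema.seq S₁ S₂) (w₁ ++ w₂)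
  | iteTrue {p xs S₁ S₂ w} : Paths S₁ w →
      Paths (Schema.ite p xs S₁ S₂) (Letter.pred p xs true :: w)
  | iteFalse {p xs S₁ S₂ w} : Paths S₂ w →
      Paths (Schema.ite p xs S₁ S₂) (Letter.pred p xs false :: w)
  | loopFalse (q : Pn) (xs : List Var) (T : Schema) :
      Paths (Schema.loop q xs T) [Letter.pred q xs false]
  | loopTrue {q xs T w ws} : Paths T w → Paths (Schema.loop q xs T) ws →
      Paths (Schema.loop q xs T) (Letter.pred q xs true :: (w ++ ws))

/-- ρ ∈ pre(Π(S)): ρ is a (finite) path through S.  (Every finite path through S,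
    including every finite prefix of an infinite path, is a prefix of a terminating path.) -/
def PathPrefix (S : Schema) (ρ : List Letter) : Prop := ∃ τ, Paths S τ ∧ ρ <+: τ

/-- `IsQuotient S' S`: S' is obtained from S by deleting zero or more statements. -/
inductive IsQuotient : Schema → Schema → Prop where
  | skip (S : Schema) : IsQuotient Schema.skip S
  | refl (S : Schema) : IsQuotient S S
  | seq {S₁' S₁ S₂' S₂} : IsQuotient S₁' S₁ → IsQuotient S₂' S₂ →
      IsQuotient (Schema.seq S₁' S₂') (Schema.seq S₁ S₂)
  | loop {q xs T' T} : IsQuotient T' T → IsQuotient (Schema.loop q xs T') (Schema.loop q xs T)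
  | ite {p xs T₁ S₁ T₂ S₂} : IsQuotient T₁ S₁ → IsQuotient T₂ S₂ →
      IsQuotient (Schema.ite p xs T₁ T₂) (Schema.ite p xs S₁ S₂)

/-- The symbol (function symbol, predicate symbol or label) of a letter. -/
def Letter.sym : Letter → Sym
  | .lab l => Sym.lab l
  | .asgn _ f _ => Sym.fn f
  | .pred p _ _ => Sym.pn p

/-- proj_{S'}(ρ): delete from ρ all letters whose function or predicate symbols,
    or labels, do not occur in S'. -/
def proj (S' : Schema) (ρ : List Letter) : List Letter :=
  ρ.filter (fun m => decide (m.sym ∈ S'.syms))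

/-- An interpretation over a domain D. -/
structure Interp (D : Type) where
  fn : Fn → List D → D
  pn : Pn → List D → Bool

/-- One execution step on (non-⊥) states; predicate letters and labels do not change the state. -/
def execLetter {D : Type} (i : Interp D) (d : Var → D) : Letter → (Var → D)
  | .asgn y f xs => Function.update d y (i.fn f (xs.map d))
  | _ => d

/-- M[schema(σ)]^i_d : the state after executing the assignments of the word σ from d. -/
def execWord {D : Type} (i : Interp D) (d : Var → D) (σ : List Letter) : Var → D :=
  σ.foldl (execLetter i) d

/-- ρ is consistent with (i,d): every predicate letter in ρ is evaluated by i in accordance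
    with the sequence of assignments preceding it. -/
def Consistent {D : Type} (i : Interp D) (d : Var → D) (ρ : List Letter) : Prop :=
  ∀ σ p xs Z, (σ ++ [Letter.pred p xs Z]) <+: ρ → i.pn p (xs.map (execWord i d σ)) = Z

/-- `ρ` is a finite prefix of the path π(S,i,d). -/
def PrefixOfPi {D : Type} (i : Interp D) (d : Var → D) (S : Schema) (ρ : List Letter) : Prop :=
  PathPrefix S ρ ∧ Consistent i d ρ

/-- The set of finite prefixes of π(S,i,d); this set determines the
    (possibly infinite) word π(S,i,d) uniquely. -/
def PiPrefixes {D : Type} (i : Interp D) (d : Var → D) (S : Schema) : Set (List Letter) :=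
  {ρ | PrefixOfPi i d S ρ}

open Classical in
/-- The final state M[S]^i_d; `none` represents ⊥ (non-termination). -/
noncomputable def finalState {D : Type} (i : Interp D) (d : Var → D) (S : Schema) :
    Option (Var → D) :=
  if h : ∃ ρ, Paths S ρ ∧ Consistent i d ρ then some (execWord i d h.choose) else none

/-- The Herbrand domain Term(F,V). -/
inductive Tm : Type where
  | var : Var → Tm
  | app : Fn → List Tm → Tm

/-- A Herbrand interpretation: function symbols act as term constructors. -/
def Interp.IsHerbrand (j : Interp Tm) : Prop := ∀ f ts, j.fn f ts = Tm.app f ts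

/-- The natural state e. -/
def natState : Var → Tm := Tm.var

/-- A fixed Herbrand interpretation (the predicate part is irrelevant for executing
    assignments). -/
def hInterp : Interp Tm := ⟨fun f ts => Tm.app f ts, fun _ _ => true⟩

/-- M[σ]_e : the Herbrand state after executing the assignments of σ from the natural state. -/
def hExec (σ : List Letter) : Var → Tm := execWord hInterp natState σ

/-- p(t) = Y is a consequence of μ. -/
def Consequence (μ : List Letter) (p : Pn) (ts : List Tm) (Y : Bool) : Prop :=
  ∃ μ' xs, (μ' ++ [Letter.pred p xs Y]) <+: μ ∧ xs.map (hExec μ') = ts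

/-- ρ is executable: ρ is a prefix of π(S,i,d) for some domain, interpretation and state. -/
def Executable (S : Schema) (ρ : List Letter) : Prop :=
  ∃ (D : Type) (i : Interp D) (d : Var → D), PrefixOfPi i d S ρ

/-- ρ (through S) and ρ' (through S') are compatible: for some domain, interpretation i
    and state d they are prefixes of π(S,i,d) and π(S',i,d) respectively. -/
def Compatible (S : Schema) (ρ : List Letter) (S' : Schema) (ρ' : List Letter) : Prop :=
  ∃ (D : Type) (i : Interp D) (d : Var → D), PrefixOfPi i d S ρ ∧ PrefixOfPi i d S' ρ'

/-- `Sub T S`: T occurs as a subschema of S. -/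
inductive Sub : Schema → Schema → Prop where
  | refl (S : Schema) : Sub S S
  | seqL {T S₁ S₂} : Sub T S₁ → Sub T (Schema.seq S₁ S₂)
  | seqR {T S₁ S₂} : Sub T S₂ → Sub T (Schema.seq S₁ S₂)
  | iteT {T p xs S₁ S₂} : Sub T S₁ → Sub T (Schema.ite p xs S₁ S₂)
  | iteF {T p xs S₁ S₂} : Sub T S₂ → Sub T (Schema.ite p xs S₁ S₂)
  | loop {T q xs B} : Sub T B → Sub T (Schema.loop q xs B)

/-- Simple l-reductions of paths through S. -/
inductive SimpleRed (S : Schema) (l : Label) : List Letter → List Letter → Prop where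
  | loopRed {p xs B σ α γ} :
      Sub (Schema.loop p xs B) S → Paths B σ → Sym.lab l ∉ B.syms →
      SimpleRed S l (α ++ [Letter.pred p xs true] ++ σ ++ [Letter.pred p xs false] ++ γ)
                    (α ++ [Letter.pred p xs false] ++ γ)
  | iteRed {p xs S₁ S₂ σ α γ} {Z : Bool} :
      Sub (Schema.ite p xs S₁ S₂) S → Paths (if Z then S₁ else S₂) σ →
      (if Z then S₂ else S₁) = Schema.skip →
      Sym.lab l ∉ S₁.syms → Sym.lab l ∉ S₂.syms →
      SimpleRed S l (α ++ [Letter.pred p xs Z] ++ σ ++ γ)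
                    (α ++ [Letter.pred p xs (!Z)] ++ γ)

/-- ρ is l-reducible to ρ': zero or more simple l-reductions. -/
def Reducible (S : Schema) (l : Label) : List Letter → List Letter → Prop :=
  Relation.ReflTransGen (SimpleRed S l)

/-- maxpre(σ,σ') : the maximal common prefix of two words. -/
def maxpre : List Letter → List Letter → List Letter
  | a :: as, b :: bs => if a = b then a :: maxpre as bs else []
  | _, _ => []

/-- The sequence of function and predicate symbols through which a path passes. -/
def symSeq (ρ : List Letter) : List Sym :=
  ρ.filterMap fun m => match m with
    | Letter.asgn _ f _ => some (Sym.fn f)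
    | Letter.pred p _ _ => some (Sym.pn p)
    | Letter.lab _ => none

/-- S' (a quotient of S containing l) is a (ρl,V)-path-faithful dynamic slice of S:
    (1) every variable of V defines the same term after proj_{S'}(ρ) as after ρ, and
    (2) every maximal path through S' compatible with ρ has proj_{S'}(ρ) as a prefix
        (equivalently: whenever ρ is a prefix of π(S,i,d), proj_{S'}(ρ) is a prefix
        of π(S',i,d)). -/
def IsPFDS (S : Schema) (ρ : List Letter) (l : Label) (V : Set Var) (S' : Schema) : Prop :=
  (∀ v ∈ V, hExec (proj S' ρ) v = hExec ρ v) ∧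
  ∀ (D : Type) (i : Interp D) (d : Var → D),
    PrefixOfPi i d S ρ → PrefixOfPi i d S' (proj S' ρ)

/-- S' (a quotient of S containing l) is a (ρl,V)-dynamic slice of S: every maximal path
    through S' compatible with ρ has a prefix ρ' to which proj_{S'}(ρ) is l-reducible and
    such that every variable of V defines the same term after ρ' as after ρ. -/
def IsDS (S : Schema) (ρ : List Letter) (l : Label) (V : Set Var) (S' : Schema) : Prop :=
  ∀ (D : Type) (i : Interp D) (d : Var → D), PrefixOfPi i d S ρ →
    ∃ ρ', PrefixOfPi i d S' ρ' ∧ Reducible S' l (proj S' ρ) ρ' ∧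
      ∀ v ∈ V, hExec ρ' v = hExec ρ v

/-- T' is a (ρ,V)-path-faithful dynamic end slice of T
    (S = T l with a label l at the end, S' = T' l). -/
def IsPFDSEnd (T : Schema) (ρ : List Letter) (V : Set Var) (T' : Schema) : Prop :=
  IsPFDS (Schema.seq T (Schema.label 0)) ρ 0 V (Schema.seq T' (Schema.label 0))

/-- T' is a (ρ,V)-dynamic end slice of T. -/
def IsDSEnd (T : Schema) (ρ : List Letter) (V : Set Var) (T' : Schema) : Prop :=
  IsDS (Schema.seq T (Schema.label 0)) ρ 0 V (Schema.seq T' (Schema.label 0))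

/-- The set of function and predicate symbols of a schema. -/
def fpsyms (T : Schema) : Set Sym := {s | s ∈ T.syms ∧ ∀ l : Label, s ≠ Sym.lab l}

/-- T is a minimal (ρ,V)-path-faithful dynamic end slice of S: it is a path-faithful
    dynamic end slice, and no quotient of S with a strictly smaller set of function and
    predicate symbols is a (ρ,V)-dynamic end slice of S. -/
def MinimalPFDSEnd (S : Schema) (ρ : List Letter) (V : Set Var) (T : Schema) : Prop :=
  IsPFDSEnd S ρ V T ∧
  ∀ T', IsQuotient T' S → fpsyms T' ⊂ fpsyms T → ¬ IsDSEnd S ρ V T'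

lemma PathPrefix.of_prefix {S : Schema} {ρ ρ' : List Letter} (h : PathPrefix S ρ')
    (hρ : ρ <+: ρ') : PathPrefix S ρ :=
  let ⟨τ, hτ, hρ'τ⟩ := h; ⟨τ, hτ, hρ.trans hρ'τ⟩

lemma Consistent.of_prefix {D : Type} {i : Interp D} {d : Var → D} {ρ ρ' : List Letter}
    (h : Consistent i d ρ') (hρ : ρ <+: ρ') : Consistent i d ρ :=
  fun σ p xs Z hσ => h σ p xs Z (hσ.trans hρ)

lemma Paths.sym_mem {S : Schema} {τ : List Letter} (h : Paths S τ) :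
    ∀ m ∈ τ, m.sym ∈ S.syms := by
  induction h <;> grind [Schema.syms, Letter.sym]

lemma IsQuotient.syms_subset {S' S : Schema} (h : IsQuotient S' S) : S'.syms ⊆ S.syms := by
  induction h <;> grind [Schema.syms]

lemma proj_skip (τ : List Letter) : proj .skip τ = [] := by
  simp [proj, Schema.syms]

lemma proj_append (S : Schema) (τ₁ τ₂ : List Letter) :
    proj S (τ₁ ++ τ₂) = proj S τ₁ ++ proj S τ₂ :=
  List.filter_append ..

lemma proj_cons_of_mem {S : Schema} {m : Letter} (τ : List Letter) (hm : m.sym ∈ S.syms) :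
    proj S (m :: τ) = m :: proj S τ :=
  List.filter_cons_of_pos (by simpa using hm)

lemma Paths.proj_self {S : Schema} {τ : List Letter} (h : Paths S τ) : proj S τ = τ :=
  List.filter_eq_self.2 fun m hm => by simpa using h.sym_mem m hm

lemma Paths.proj_congr {T S S' : Schema} {τ : List Letter} (hτ : Paths T τ)
    (h : ∀ s ∈ T.syms, s ∈ S.syms ↔ s ∈ S'.syms) : proj S τ = proj S' τ :=
  List.filter_congr fun m hm => by simp [h _ (hτ.sym_mem m hm)]

lemma Paths.proj_loop {q : Pn} {xs : List Var} {T T' : Schema} {τ : List Letter}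
    (hτ : Paths (.loop q xs T) τ) (hqT : Sym.pn q ∉ T.syms)
    (hT : ∀ w, Paths T w → Paths T' (proj T' w)) :
    Paths (.loop q xs T') (proj (.loop q xs T') τ) := by
  generalize hS : Schema.loop q xs T = S at hτ
  induction hτ with
  | loopFalse =>
    cases hS
    rw [proj_cons_of_mem _ (by simp [Schema.syms, Letter.sym])]
    exact .loopFalse q xs T'
  | @loopTrue _ _ _ w ws hw _ _ ih =>
    cases hS
    have hw' : proj (.loop q xs T') w = proj T' w :=
      hw.proj_congr fun s hs => by grind [Schema.syms]
    rw [proj_cons_of_mem _ (by simp [Schema.syms, Letter.sym]), proj_append, hw']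
    exact .loopTrue (hT w hw) (ih rfl)
  | _ => cases hS

theorem IsQuotient.paths_proj {S' S : Schema} (hq : IsQuotient S' S) (hlin : S.Linear)
    {τ : List Letter} (hτ : Paths S τ) : Paths S' (proj S' τ) := by
  induction hq generalizing τ with
  | skip => rw [proj_skip]; exact .skip
  | refl => rwa [hτ.proj_self]
  | @seq S₁' S₁ S₂' S₂ hq₁ hq₂ ih₁ ih₂ =>
    obtain ⟨hlin₁, hlin₂, hdisj⟩ := List.nodup_append.1 hlin
    cases hτ with
    | @seq _ _ w₁ w₂ h₁ h₂ =>
      have e₁ : proj (.seq S₁' S₂') w₁ = proj S₁' w₁ := h₁.proj_congr fun s hs => by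
        grind [Schema.syms, hq₂.syms_subset]
      have e₂ : proj (.seq S₁' S₂') w₂ = proj S₂' w₂ := h₂.proj_congr fun s hs => by
        grind [Schema.syms, hq₁.syms_subset]
      rw [proj_append, e₁, e₂]
      exact .seq (ih₁ hlin₁ h₁) (ih₂ hlin₂ h₂)
  | loop _ ih =>
    obtain ⟨hqT, hlinT⟩ := List.nodup_cons.1 hlin
    exact hτ.proj_loop hqT fun w hw => ih hlinT hw
  | @ite p xs T₁ S₁ T₂ S₂ hq₁ hq₂ ih₁ ih₂ =>
    obtain ⟨hp, hlin'⟩ := List.nodup_cons.1 hlin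
    obtain ⟨hlin₁, hlin₂, hdisj⟩ := List.nodup_append.1 hlin'
    have hhead : ∀ Z, (Letter.pred p xs Z).sym ∈ (Schema.ite p xs T₁ T₂).syms := by
      simp [Schema.syms, Letter.sym]
    cases hτ with
    | @iteTrue _ _ _ _ w h =>
      have e : proj (.ite p xs T₁ T₂) w = proj T₁ w := h.proj_congr fun s hs => by
        grind [Schema.syms, hq₂.syms_subset]
      rw [proj_cons_of_mem _ (hhead true), e]
      exact .iteTrue (ih₁ hlin₁ h)
    | @iteFalse _ _ _ _ w h =>
      have e : proj (.ite p xs T₁ T₂) w = proj T₂ w := h.proj_congr fun s hs => by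
        grind [Schema.syms, hq₁.syms_subset]
      rw [proj_cons_of_mem _ (hhead false), e]
      exact .iteFalse (ih₂ hlin₂ h)

def Tm.eval {D : Type} (i : Interp D) (d : Var → D) : Tm → D
  | .var v => d v
  | .app f ts => i.fn f (ts.map (Tm.eval i d))

lemma Tm.eval_natState_of_isHerbrand {j : Interp Tm} (hj : j.IsHerbrand) :
    ∀ t : Tm, t.eval j natState = t
  | .var _ => by rw [Tm.eval]; rfl
  | .app f ts => by
    rw [Tm.eval, hj]
    congr 1
    conv_rhs => rw [← List.map_id ts]
    exact List.map_congr_left fun t _ => Tm.eval_natState_of_isHerbrand hj t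

lemma Tm.eval_comp_execWord {D : Type} (i : Interp D) (d : Var → D) {j : Interp Tm}
    (hj : j.IsHerbrand) (σ : List Letter) (e : Var → Tm) :
    Tm.eval i d ∘ execWord j e σ = execWord i (Tm.eval i d ∘ e) σ := by
  induction σ generalizing e with
  | nil => rfl
  | cons m σ ih =>
    simp only [execWord, List.foldl_cons] at ih ⊢
    rw [ih]
    congr 1
    cases m with
    | asgn y f xs =>
      funext x
      by_cases hx : x = y
      · subst hx; simp [execLetter, hj f, Tm.eval]
      · simp [execLetter, hx]
    | _ => rfl

lemma Tm.eval_hExec {D : Type} (i : Interp D) (d : Var → D) (σ : List Letter) (x : Var) :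
    (hExec σ x).eval i d = execWord i d σ x := by
  have := congrFun (Tm.eval_comp_execWord i d (j := hInterp) (fun _ _ => rfl) σ natState) x
  have hd : Tm.eval i d ∘ natState = d := funext fun v => by simp [natState, Tm.eval]
  rwa [hd] at this

lemma consistent_iff_forall_consequence {D : Type} {i : Interp D} {d : Var → D}
    {ρ : List Letter} :
    Consistent i d ρ ↔
      ∀ p ts Z, Consequence ρ p ts Z → i.pn p (ts.map (Tm.eval i d)) = Z := by
  have hmap : ∀ σ (xs : List Var),
      (xs.map (hExec σ)).map (Tm.eval i d) = xs.map (execWord i d σ) := fun σ xs => by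
    simp [Function.comp_def, Tm.eval_hExec]
  constructor
  · rintro h p _ Z ⟨σ, xs, hσ, rfl⟩
    rw [hmap]
    exact h σ p xs Z hσ
  · intro h σ p xs Z hσ
    rw [← hmap]
    exact h p _ Z ⟨σ, xs, hσ, rfl⟩

lemma Consistent.of_consequence_imp {D : Type} {i : Interp D} {d : Var → D}
    {ρ ρ' : List Letter} (h : Consistent i d ρ)
    (hρ' : ∀ p ts Z, Consequence ρ' p ts Z → Consequence ρ p ts Z) : Consistent i d ρ' :=
  consistent_iff_forall_consequence.2 fun p ts Z hc =>
    consistent_iff_forall_consequence.1 h p ts Z (hρ' p ts Z hc)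

lemma Consistent.consequence_unique {D : Type} {i : Interp D} {d : Var → D}
    {ρ : List Letter} (h : Consistent i d ρ) {p : Pn} {ts : List Tm} {Y Z : Bool}
    (hY : Consequence ρ p ts Y) (hZ : Consequence ρ p ts Z) : Y = Z :=
  (consistent_iff_forall_consequence.1 h p ts Y hY).symm.trans
    (consistent_iff_forall_consequence.1 h p ts Z hZ)

open Classical in
noncomputable def biasedInterp (ρ : List Letter) (X : Bool) : Interp Tm :=
  ⟨Tm.app, fun p ts => if Consequence ρ p ts X then X else !X⟩

lemma biasedInterp_isHerbrand (ρ : List Letter) (X : Bool) :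
    (biasedInterp ρ X).IsHerbrand :=
  fun _ _ => rfl

open Classical in
lemma consistent_biasedInterp_iff {ρ ρ' : List Letter} {X : Bool} :
    Consistent (biasedInterp ρ X) natState ρ' ↔
      ∀ p ts Z, Consequence ρ' p ts Z → (if Consequence ρ p ts X then X else !X) = Z := by
  rw [consistent_iff_forall_consequence]
  simp only [List.map_id'' (Tm.eval_natState_of_isHerbrand (biasedInterp_isHerbrand ρ X))]
  rfl

lemma Consistent.biasedInterp_consistent {D : Type} {i : Interp D} {d : Var → D}
    {ρ : List Letter} (h : Consistent i d ρ) (X : Bool) :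
    Consistent (biasedInterp ρ X) natState ρ := by
  refine consistent_biasedInterp_iff.2 fun p ts Z hZ => ?_
  by_cases hX : Consequence ρ p ts X
  · rw [if_pos hX]
    exact h.consequence_unique hX hZ
  · rw [if_neg hX]
    cases X <;> cases Z <;> simp_all

lemma consequence_of_consistent_biasedInterp {ρ ρ' : List Letter} {X : Bool}
    (h : Consistent (biasedInterp ρ X) natState ρ') {p : Pn} {ts : List Tm}
    (hc : Consequence ρ' p ts X) : Consequence ρ p ts X := by
  have := consistent_biasedInterp_iff.1 h p ts X hc
  by_contra hX
  rw [if_neg hX] at this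
  cases X <;> simp at this

theorem statement_6_general (S : Schema) (l : Label) (ρ : List Letter) (V : Set Var) (S' : Schema)
    (hlin : S.Linear)
    (hexec : Executable S (ρ ++ [Letter.lab l]))
    (hquot : IsQuotient S' S) :
    IsPFDS S ρ l V S' ↔
      ((∀ v ∈ V, hExec ρ v = hExec (proj S' ρ) v) ∧
       ∀ (p : Pn) (ts : List Tm) (X : Bool),
         Consequence (proj S' ρ) p ts X → Consequence ρ p ts X) := by
  constructor
  · rintro ⟨hvar, hfaithful⟩
    obtain ⟨D, i, d, hρl, hρl_cons⟩ := hexec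
    have hρ : Consistent i d ρ := hρl_cons.of_prefix (List.prefix_append ρ _)
    refine ⟨fun v hv => (hvar v hv).symm, fun p ts X hc => ?_⟩
    have hproj := hfaithful Tm (biasedInterp ρ X) natState
      ⟨hρl.of_prefix (List.prefix_append ρ _), hρ.biasedInterp_consistent X⟩
    exact consequence_of_consistent_biasedInterp hproj.2 hc
  · rintro ⟨hvar, hconseq⟩
    refine ⟨fun v hv => (hvar v hv).symm, fun D i d ⟨⟨τ, hτ, hρτ⟩, hcons⟩ => ⟨?_, ?_⟩⟩
    · exact ⟨proj S' τ, hquot.paths_proj hlin hτ, hρτ.filter _⟩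
    · exact hcons.of_consequence_imp hconseq

/-- Theorem 3.2 / dps.verify.thm: S' is a (ρl,V)-path-faithful dynamic
    slice of S iff M[ρ]_e(v) = M[proj_{S'}(ρ)]_e(v) for all v ∈ V and every expression
    p(t) = X which is a consequence of proj_{S'}(ρ) is also a consequence of ρ. -/
theorem statement_6 (S : Schema) (l : Label) (ρ : List Letter) (V : Set Var) (S' : Schema)
    (hlin : S.Linear) (hlS : Sym.lab l ∈ S.syms)
    (hpath : PathPrefix S (ρ ++ [Letter.lab l]))
    (hexec : Executable S (ρ ++ [Letter.lab l]))
    (hquot : IsQuotient S' S) (hlS' : Sym.lab l ∈ S'.syms) :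
    IsPFDS S ρ l V S' ↔
      ((∀ v ∈ V, hExec ρ v = hExec (proj S' ρ) v) ∧
       ∀ (p : Pn) (ts : List Tm) (X : Bool),
         Consequence (proj S' ρ) p ts X → Consequence ρ p ts X) :=
  statement_6_general S l ρ V S' hlin hexec hquot

end SchemaSlicing
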